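/- Let Q be a positivity preserving form in the wide sense with resolvent G_α. A measurable set A ⊆ X is Q-invariant (i.e., G_α(1_A f) = 1_A G_α f for all f ∈ L²(X,m), α > 0) if and only if for every f ∈ D(Q) one has 1_A f ∈ D(Q) and Q(f) = Q(1_A f) + Q(1_{X∖A} f). -/

import Mathlib

/-!
Write `q_α(u) = α ⟪u - α G_α u, u⟫`. For `w ∈ D(Q)` the resolvent equation reads
`Q(α G_α u, w) = α ⟪u - α G_α u, w⟫`, from which `q_α(u) ≤ Q(u)` on `D(Q)` and
`Q(α G_α u - β G_β u) ≤ q_β(u) - q_α(u)` for `α ≤ β`. Hence if the `q_α(u)` are bounded,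
`α G_α u` is Cauchy in the form norm and tends to `u` in `L²`, so closedness gives `u ∈ D(Q)` and
`q_α(u) → Q(u)`.

If `A` is invariant, multiplication by `1_A` commutes with `G_α`, so `q_α` splits along `A` and
`Aᶜ`, and the splitting passes to the limit. Conversely, the splitting of `Q` makes
`Q(1_A u, 1_{Aᶜ} v)` vanish by polarization, so multiplication by `1_A` is `Q`-symmetric on
`D(Q)`, and `1_A G_α f` satisfies the variational equation that characterizes `G_α (1_A f)`.
-/

open MeasureTheory Filter Topology RealInnerProductSpace

noncomputable section

variable {X : Type*} [MeasurableSpace X]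

open scoped Classical in
/-- Multiplication by the indicator function of a set `A`, as a map on `L²`. -/
def indMul {μ : Measure X} (A : Set X) (f : Lp ℝ 2 μ) : Lp ℝ 2 μ :=
  if h : MeasurableSet A then ((Lp.memLp f).indicator h).toLp else 0

/-- A closed (nonnegative, symmetric) quadratic form in the wide sense on `L²(X,m)`:
its domain is a not necessarily dense subspace which is complete in the form norm. -/
structure WideForm (μ : Measure X) where
  dom : Submodule ℝ (Lp ℝ 2 μ)
  Q : Lp ℝ 2 μ → Lp ℝ 2 μ → ℝ
  symm : ∀ u v, Q u v = Q v u
  add_left : ∀ u v w, Q (u + v) w = Q u w + Q v w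
  smul_left : ∀ (c : ℝ) u v, Q (c • u) v = c * Q u v
  nonneg : ∀ u, 0 ≤ Q u u
  closed : ∀ f : ℕ → Lp ℝ 2 μ, (∀ n, f n ∈ dom) →
    (∀ ε > 0, ∃ N, ∀ m ≥ N, ∀ n ≥ N,
      Q (f m - f n) (f m - f n) + ‖f m - f n‖ ^ 2 < ε) →
    ∃ g ∈ dom, Tendsto (fun n => Q (f n - g) (f n - g) + ‖f n - g‖ ^ 2) atTop (nhds 0)

/-- `G` is the resolvent family of the closed form `T`. -/
def WideForm.IsResolvent {μ : Measure X} (T : WideForm μ)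
    (G : ℝ → Lp ℝ 2 μ →L[ℝ] Lp ℝ 2 μ) : Prop :=
  ∀ α > 0, ∀ u, G α u ∈ T.dom ∧
    ∀ v ∈ T.dom, T.Q (G α u) v + α * ⟪G α u, v⟫ = ⟪u, v⟫

/-- `T` is positivity preserving. -/
def WideForm.PosPres {μ : Measure X} (T : WideForm μ) : Prop :=
  ∀ u ∈ T.dom, |u| ∈ T.dom ∧ T.Q |u| |u| ≤ T.Q u u

/-- `A` is invariant for the resolvent family `G`. -/
def ResInvariant {μ : Measure X} (G : ℝ → Lp ℝ 2 μ →L[ℝ] Lp ℝ 2 μ) (A : Set X) : Prop :=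
  MeasurableSet A ∧ ∀ α > 0, ∀ f, G α (indMul A f) = indMul A (G α f)

lemma tendsto_of_tendsto_norm_sub_sq {ι E : Type*} [SeminormedAddCommGroup E] {l : Filter ι}
    {f : ι → E} {g : E} (h : Tendsto (fun i => ‖f i - g‖ ^ 2) l (𝓝 0)) : Tendsto f l (𝓝 g) := by
  rw [tendsto_iff_norm_sub_tendsto_zero]
  simpa using h.sqrt

section IndMul

variable {μ : Measure X} {A : Set X}

lemma indMul_ae_eq (hA : MeasurableSet A) (f : Lp ℝ 2 μ) :
    (indMul A f : X → ℝ) =ᵐ[μ] A.indicator f := by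
  simp only [indMul, dif_pos hA]
  exact MemLp.coeFn_toLp _

lemma indMul_add (hA : MeasurableSet A) (f g : Lp ℝ 2 μ) :
    indMul A (f + g) = indMul A f + indMul A g := by
  apply Lp.ext
  filter_upwards [indMul_ae_eq hA (f + g), indMul_ae_eq hA f, indMul_ae_eq hA g,
    Lp.coeFn_add (indMul A f) (indMul A g), (Lp.coeFn_add f g).indicator (s := A)]
    with x h1 h2 h3 h4 h5
  rw [h1, h4, h5, Pi.add_apply, h2, h3, Set.indicator_add']
  rfl

lemma indMul_smul (hA : MeasurableSet A) (c : ℝ) (f : Lp ℝ 2 μ) :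
    indMul A (c • f) = c • indMul A f := by
  apply Lp.ext
  filter_upwards [indMul_ae_eq hA (c • f), indMul_ae_eq hA f,
    Lp.coeFn_smul c (indMul A f), (Lp.coeFn_smul c f).indicator (s := A)]
    with x h1 h2 h3 h4
  rw [h1, h3, h4, Pi.smul_apply, h2]
  exact Set.indicator_const_smul_apply A c _ x

lemma indMul_sub (hA : MeasurableSet A) (f g : Lp ℝ 2 μ) :
    indMul A (f - g) = indMul A f - indMul A g := by
  rw [eq_sub_iff_add_eq, ← indMul_add hA, sub_add_cancel]

lemma indMul_add_indMul_compl (hA : MeasurableSet A) (f : Lp ℝ 2 μ) :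
    indMul A f + indMul Aᶜ f = f := by
  apply Lp.ext
  filter_upwards [indMul_ae_eq hA f, indMul_ae_eq hA.compl f,
    Lp.coeFn_add (indMul A f) (indMul Aᶜ f)] with x h1 h2 h3
  rw [h3, Pi.add_apply, h1, h2]
  exact congrFun (Set.indicator_self_add_compl A (f : X → ℝ)) x

lemma indMul_compl (hA : MeasurableSet A) (f : Lp ℝ 2 μ) :
    indMul Aᶜ f = f - indMul A f := by
  rw [eq_sub_iff_add_eq, add_comm, indMul_add_indMul_compl hA]

lemma inner_indMul_left (hA : MeasurableSet A) (f g : Lp ℝ 2 μ) :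
    ⟪indMul A f, g⟫ = ⟪f, indMul A g⟫ := by
  rw [L2.inner_def, L2.inner_def]
  apply integral_congr_ae
  filter_upwards [indMul_ae_eq hA f, indMul_ae_eq hA g] with x h1 h2
  rw [h1, h2]
  by_cases hx : x ∈ A <;> simp [hx, mul_comm]

lemma indMul_indMul (hA : MeasurableSet A) (f : Lp ℝ 2 μ) :
    indMul A (indMul A f) = indMul A f := by
  apply Lp.ext
  filter_upwards [indMul_ae_eq hA (indMul A f), indMul_ae_eq hA f,
    (indMul_ae_eq hA f).indicator (s := A)] with x h1 h2 h3
  rw [h1, h3, Set.indicator_indicator, Set.inter_self, h2]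

lemma indMul_compl_indMul (hA : MeasurableSet A) (f : Lp ℝ 2 μ) :
    indMul Aᶜ (indMul A f) = 0 := by
  rw [indMul_compl hA, indMul_indMul hA, sub_self]

end IndMul

namespace WideForm

variable {μ : Measure X} (T : WideForm μ)

def toBilinForm : LinearMap.BilinForm ℝ (Lp ℝ 2 μ) :=
  LinearMap.mk₂ ℝ T.Q T.add_left T.smul_left
    (fun u v w => by rw [T.symm, T.add_left, T.symm v, T.symm w])
    (fun c u v => by rw [T.symm, T.smul_left, T.symm v, smul_eq_mul])

lemma Q_add_right (u v w : Lp ℝ 2 μ) : T.Q u (v + w) = T.Q u v + T.Q u w :=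
  map_add (T.toBilinForm u) v w

lemma Q_smul_right (c : ℝ) (u v : Lp ℝ 2 μ) : T.Q u (c • v) = c * T.Q u v :=
  map_smul (T.toBilinForm u) c v

lemma Q_sub_left (u v w : Lp ℝ 2 μ) : T.Q (u - v) w = T.Q u w - T.Q v w :=
  LinearMap.map_sub₂ T.toBilinForm u v w

lemma Q_sub_right (u v w : Lp ℝ 2 μ) : T.Q u (v - w) = T.Q u v - T.Q u w :=
  map_sub (T.toBilinForm u) v w

lemma Q_add_self (u v : Lp ℝ 2 μ) :
    T.Q (u + v) (u + v) = T.Q u u + 2 * T.Q u v + T.Q v v := by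
  rw [T.add_left, Q_add_right, Q_add_right, T.symm v u]
  ring

lemma Q_sub_self (u v : Lp ℝ 2 μ) :
    T.Q (u - v) (u - v) = T.Q u u - 2 * T.Q u v + T.Q v v := by
  rw [Q_sub_left, Q_sub_right, Q_sub_right, T.symm v u]
  ring

lemma Q_sub_self_comm (u v : Lp ℝ 2 μ) : T.Q (u - v) (u - v) = T.Q (v - u) (v - u) := by
  rw [Q_sub_self, Q_sub_self, T.symm u v]
  ring

lemma Q_sq_le (u v : Lp ℝ 2 μ) : T.Q u v ^ 2 ≤ T.Q u u * T.Q v v :=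
  T.toBilinForm.apply_sq_le_of_symm T.nonneg ⟨fun u v => T.symm u v⟩ u v

lemma tendsto_Q_self_of_tendsto_Q_sub {ι : Type*} {l : Filter ι} {f : ι → Lp ℝ 2 μ}
    {u : Lp ℝ 2 μ} (h : Tendsto (fun i => T.Q (f i - u) (f i - u)) l (𝓝 0)) :
    Tendsto (fun i => T.Q (f i) (f i)) l (𝓝 (T.Q u u)) := by
  have hcross : Tendsto (fun i => T.Q u (f i - u)) l (𝓝 0) := by
    refine squeeze_zero_norm (fun i => Real.abs_le_sqrt (T.Q_sq_le u (f i - u))) ?_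
    simpa using (h.const_mul (T.Q u u)).sqrt
  have hexp : ∀ i, T.Q (f i) (f i) = T.Q u u + 2 * T.Q u (f i - u) + T.Q (f i - u) (f i - u) :=
    fun i => by rw [← T.Q_add_self, add_sub_cancel]
  simpa [hexp] using ((hcross.const_mul 2).const_add (T.Q u u)).add h

lemma tendsto_Q_sub_of_le_sub {f : ℕ → Lp ℝ 2 μ} {q : ℕ → ℝ} (hq : BddAbove (Set.range q))
    (h : ∀ m n, m ≤ n → T.Q (f m - f n) (f m - f n) ≤ q n - q m) :
    Tendsto (fun p : ℕ × ℕ => T.Q (f p.1 - f p.2) (f p.1 - f p.2)) atTop (𝓝 0) := by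
  have hmono : Monotone q := fun m n hmn => sub_nonneg.mp ((T.nonneg _).trans (h m n hmn))
  refine squeeze_zero (fun p => T.nonneg _) (fun ⟨m, n⟩ => ?_)
    (cauchySeq_iff_tendsto_dist_atTop_0.mp (tendsto_atTop_ciSup hmono hq).cauchySeq)
  rw [Real.dist_eq]
  rcases le_total m n with hmn | hnm
  · exact (h m n hmn).trans ((le_abs_self _).trans_eq (abs_sub_comm _ _))
  · exact (T.Q_sub_self_comm _ _).trans_le ((h n m hnm).trans (le_abs_self _))

lemma mem_dom_of_tendsto {f : ℕ → Lp ℝ 2 μ} {u : Lp ℝ 2 μ} (hf : ∀ n, f n ∈ T.dom)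
    (hQ : Tendsto (fun p : ℕ × ℕ => T.Q (f p.1 - f p.2) (f p.1 - f p.2)) atTop (𝓝 0))
    (hu : Tendsto f atTop (𝓝 u)) :
    u ∈ T.dom ∧ Tendsto (fun n => T.Q (f n - u) (f n - u)) atTop (𝓝 0) := by
  have hdist := cauchySeq_iff_tendsto_dist_atTop_0.mp hu.cauchySeq
  have hcauchy := hQ.add (hdist.pow 2)
  rw [zero_pow two_ne_zero, add_zero] at hcauchy
  simp only [dist_eq_norm] at hcauchy
  obtain ⟨g, hg, hfg⟩ := T.closed f hf fun ε hε =>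
    eventually_atTop_prod_self'.mp (hcauchy.eventually (gt_mem_nhds hε))
  have hQg : Tendsto (fun n => T.Q (f n - g) (f n - g)) atTop (𝓝 0) :=
    squeeze_zero (fun n => T.nonneg _) (fun n => le_add_of_nonneg_right (by positivity)) hfg
  have hnorm : Tendsto (fun n => ‖f n - g‖ ^ 2) atTop (𝓝 0) :=
    squeeze_zero (fun n => by positivity) (fun n => le_add_of_nonneg_left (T.nonneg _)) hfg
  obtain rfl := tendsto_nhds_unique (tendsto_of_tendsto_norm_sub_sq hnorm) hu
  exact ⟨hg, hQg⟩

end WideForm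

def approxForm {μ : Measure X} (G : ℝ → Lp ℝ 2 μ →L[ℝ] Lp ℝ 2 μ) (α : ℝ) (u : Lp ℝ 2 μ) : ℝ :=
  α * ⟪u - α • G α u, u⟫

namespace WideForm.IsResolvent

variable {μ : Measure X} {T : WideForm μ} {G : ℝ → Lp ℝ 2 μ →L[ℝ] Lp ℝ 2 μ}
  (hG : T.IsResolvent G) {α β : ℝ}
include hG

lemma mem_dom (hα : 0 < α) (u : Lp ℝ 2 μ) : G α u ∈ T.dom :=
  (hG α hα u).1

lemma Q_add_inner (hα : 0 < α) (u : Lp ℝ 2 μ) {v : Lp ℝ 2 μ} (hv : v ∈ T.dom) :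
    T.Q (G α u) v + α * ⟪G α u, v⟫ = ⟪u, v⟫ :=
  (hG α hα u).2 v hv

lemma eq_apply_of_forall (hα : 0 < α) {u w : Lp ℝ 2 μ} (hw : w ∈ T.dom)
    (h : ∀ v ∈ T.dom, T.Q w v + α * ⟪w, v⟫ = ⟪u, v⟫) : w = G α u := by
  set d := w - G α u
  have hd : d ∈ T.dom := T.dom.sub_mem hw (hG.mem_dom hα u)
  have h0 : T.Q d d + α * ‖d‖ ^ 2 = 0 := by
    rw [T.Q_sub_left, ← real_inner_self_eq_norm_sq, inner_sub_left]
    linarith [h d hd, hG.Q_add_inner hα u hd]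
  have hnorm : ‖d‖ ^ 2 = 0 := by nlinarith [T.nonneg d, sq_nonneg ‖d‖]
  exact sub_eq_zero.mp (norm_eq_zero.mp (pow_eq_zero_iff two_ne_zero |>.mp hnorm))

lemma Q_smul_apply (hα : 0 < α) (u : Lp ℝ 2 μ) {w : Lp ℝ 2 μ} (hw : w ∈ T.dom) :
    T.Q (α • G α u) w = α * ⟪u - α • G α u, w⟫ := by
  rw [T.smul_left, inner_sub_left, real_inner_smul_left]
  linear_combination α * hG.Q_add_inner hα u hw

lemma approxForm_eq (hα : 0 < α) (u : Lp ℝ 2 μ) :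
    approxForm G α u = α * ‖u - α • G α u‖ ^ 2 + T.Q (α • G α u) (α • G α u) := by
  rw [hG.Q_smul_apply hα u (T.dom.smul_mem α (hG.mem_dom hα u)), approxForm,
    ← real_inner_self_eq_norm_sq, ← mul_add, ← inner_add_right, sub_add_cancel]

lemma approxForm_nonneg (hα : 0 < α) (u : Lp ℝ 2 μ) : 0 ≤ approxForm G α u := by
  rw [hG.approxForm_eq hα]
  exact add_nonneg (by positivity) (T.nonneg _)

lemma Q_smul_le_approxForm (hα : 0 < α) (u : Lp ℝ 2 μ) :
    T.Q (α • G α u) (α • G α u) ≤ approxForm G α u := by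
  rw [hG.approxForm_eq hα]
  exact le_add_of_nonneg_left (by positivity)

lemma mul_norm_sq_le_approxForm (hα : 0 < α) (u : Lp ℝ 2 μ) :
    α * ‖u - α • G α u‖ ^ 2 ≤ approxForm G α u := by
  rw [hG.approxForm_eq hα]
  exact le_add_of_nonneg_right (T.nonneg _)

lemma approxForm_le (hα : 0 < α) {u : Lp ℝ 2 μ} (hu : u ∈ T.dom) :
    approxForm G α u ≤ T.Q u u := by
  set s := u - α • G α u
  have hs : s ∈ T.dom := T.dom.sub_mem hu (T.dom.smul_mem α (hG.mem_dom hα u))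
  have hsplit := T.Q_add_self (α • G α u) s
  rw [add_sub_cancel, hG.Q_smul_apply hα u hs, real_inner_self_eq_norm_sq] at hsplit
  rw [hG.approxForm_eq hα, hsplit]
  have : 0 ≤ α * ‖s‖ ^ 2 := by positivity
  linarith [T.nonneg s]

lemma Q_sub_le (hα : 0 < α) (hαβ : α ≤ β) (u : Lp ℝ 2 μ) :
    T.Q (α • G α u - β • G β u) (α • G α u - β • G β u) ≤
      approxForm G β u - approxForm G α u := by
  have hβ : 0 < β := hα.trans_le hαβ
  have hcross : T.Q (α • G α u) (β • G β u) =
      approxForm G α u - α * ⟪u - α • G α u, u - β • G β u⟫ := by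
    rw [hG.Q_smul_apply hα u (T.dom.smul_mem β (hG.mem_dom hβ u)), approxForm, ← mul_sub,
      ← inner_sub_right, sub_sub_cancel]
  have hid : T.Q (α • G α u - β • G β u) (α • G α u - β • G β u) =
      approxForm G β u - approxForm G α u - α * ‖(u - α • G α u) - (u - β • G β u)‖ ^ 2 -
        (β - α) * ‖u - β • G β u‖ ^ 2 := by
    rw [T.Q_sub_self, hcross, norm_sub_sq_real]
    linear_combination -hG.approxForm_eq hβ u - hG.approxForm_eq hα u
  have : 0 ≤ α * ‖(u - α • G α u) - (u - β • G β u)‖ ^ 2 + (β - α) * ‖u - β • G β u‖ ^ 2 := by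
    have := sub_nonneg.mpr hαβ
    positivity
  linarith

lemma tendsto_smul_apply_of_approxForm_le {u : Lp ℝ 2 μ} {M : ℝ}
    (hM : ∀ n : ℕ, approxForm G (n + 1) u ≤ M) :
    Tendsto (fun n : ℕ => ((n : ℝ) + 1) • G (n + 1) u) atTop (𝓝 u) := by
  refine tendsto_of_tendsto_norm_sub_sq (squeeze_zero (fun n => by positivity) (fun n => ?_)
    (by simpa using (tendsto_one_div_add_atTop_nhds_zero_nat (𝕜 := ℝ)).const_mul M))
  have hn : (0 : ℝ) < n + 1 := by positivity
  rw [← norm_neg, neg_sub, ← div_eq_mul_inv, le_div_iff₀' hn]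
  exact (hG.mul_norm_sq_le_approxForm hn u).trans (hM n)

lemma mem_dom_and_tendsto_of_approxForm_le {u : Lp ℝ 2 μ} {M : ℝ}
    (hM : ∀ n : ℕ, approxForm G (n + 1) u ≤ M) :
    u ∈ T.dom ∧ Tendsto (fun n : ℕ => T.Q (((n : ℝ) + 1) • G (n + 1) u - u)
      (((n : ℝ) + 1) • G (n + 1) u - u)) atTop (𝓝 0) := by
  have hpos (n : ℕ) : (0 : ℝ) < n + 1 := by positivity
  have hQ := T.tendsto_Q_sub_of_le_sub (f := fun n : ℕ => ((n : ℝ) + 1) • G (n + 1) u)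
    (q := fun n : ℕ => approxForm G (n + 1) u) ⟨M, by rintro _ ⟨n, rfl⟩; exact hM n⟩
    fun m n hmn => hG.Q_sub_le (hpos m) (by gcongr) u
  exact T.mem_dom_of_tendsto (fun n => T.dom.smul_mem _ (hG.mem_dom (hpos n) u)) hQ
    (hG.tendsto_smul_apply_of_approxForm_le hM)

lemma tendsto_approxForm {u : Lp ℝ 2 μ} (hu : u ∈ T.dom) :
    Tendsto (fun n : ℕ => approxForm G (n + 1) u) atTop (𝓝 (T.Q u u)) := by
  have hpos (n : ℕ) : (0 : ℝ) < n + 1 := by positivity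
  have hQ := T.tendsto_Q_self_of_tendsto_Q_sub
    (hG.mem_dom_and_tendsto_of_approxForm_le fun n => hG.approxForm_le (hpos n) hu).2
  exact tendsto_of_tendsto_of_tendsto_of_le_of_le hQ tendsto_const_nhds
    (fun n => hG.Q_smul_le_approxForm (hpos n) u) (fun n => hG.approxForm_le (hpos n) hu)

end WideForm.IsResolvent

namespace ResInvariant

variable {μ : Measure X} {G : ℝ → Lp ℝ 2 μ →L[ℝ] Lp ℝ 2 μ} {A : Set X} (h : ResInvariant G A)
  {α : ℝ}
include h

lemma compl : ResInvariant G Aᶜ :=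
  ⟨h.1.compl, fun α hα f => by rw [indMul_compl h.1, indMul_compl h.1, map_sub, h.2 α hα f]⟩

lemma approxForm_indMul (hα : 0 < α) (f : Lp ℝ 2 μ) :
    approxForm G α (indMul A f) = α * ⟪f - α • G α f, indMul A f⟫ := by
  rw [approxForm, h.2 α hα f, ← indMul_smul h.1, ← indMul_sub h.1, inner_indMul_left h.1,
    indMul_indMul h.1]

lemma approxForm_indMul_add_indMul_compl (hα : 0 < α) (f : Lp ℝ 2 μ) :
    approxForm G α (indMul A f) + approxForm G α (indMul Aᶜ f) = approxForm G α f := by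
  rw [h.approxForm_indMul hα, h.compl.approxForm_indMul hα, ← mul_add, ← inner_add_right,
    indMul_add_indMul_compl h.1, approxForm]

end ResInvariant

def WideForm.SplitsAlong {μ : Measure X} (T : WideForm μ) (A : Set X) : Prop :=
  ∀ f ∈ T.dom, indMul A f ∈ T.dom ∧
    T.Q f f = T.Q (indMul A f) (indMul A f) + T.Q (indMul Aᶜ f) (indMul Aᶜ f)

lemma ResInvariant.splitsAlong {μ : Measure X} {T : WideForm μ}
    {G : ℝ → Lp ℝ 2 μ →L[ℝ] Lp ℝ 2 μ} {A : Set X} (h : ResInvariant G A)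
    (hG : T.IsResolvent G) : T.SplitsAlong A := by
  intro f hf
  have hpos (n : ℕ) : (0 : ℝ) < n + 1 := by positivity
  have hsplit (n : ℕ) := h.approxForm_indMul_add_indMul_compl (hpos n) f
  have hbound (n : ℕ) := hG.approxForm_le (hpos n) hf
  have hmemA := (hG.mem_dom_and_tendsto_of_approxForm_le (u := indMul A f) (M := T.Q f f)
    fun n => by linarith [hsplit n, hbound n, hG.approxForm_nonneg (hpos n) (indMul Aᶜ f)]).1
  have hmemAc := (hG.mem_dom_and_tendsto_of_approxForm_le (u := indMul Aᶜ f) (M := T.Q f f)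
    fun n => by linarith [hsplit n, hbound n, hG.approxForm_nonneg (hpos n) (indMul A f)]).1
  refine ⟨hmemA, tendsto_nhds_unique (hG.tendsto_approxForm hf) ?_⟩
  simpa only [hsplit] using (hG.tendsto_approxForm hmemA).add (hG.tendsto_approxForm hmemAc)

namespace WideForm.SplitsAlong

variable {μ : Measure X} {T : WideForm μ} {A : Set X} (hT : T.SplitsAlong A)
  (hA : MeasurableSet A) {u v : Lp ℝ 2 μ}
include hT hA

lemma Q_indMul_indMul_compl_self (hu : u ∈ T.dom) : T.Q (indMul A u) (indMul Aᶜ u) = 0 := by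
  have h := T.Q_add_self (indMul A u) (indMul Aᶜ u)
  rw [indMul_add_indMul_compl hA, (hT u hu).2] at h
  linarith

lemma Q_indMul_indMul_compl (hu : u ∈ T.dom) (hv : v ∈ T.dom) :
    T.Q (indMul A v) (indMul Aᶜ u) = 0 := by
  have h := hT.Q_indMul_indMul_compl_self hA (T.dom.add_mem hu (hT v hv).1)
  rwa [indMul_add hA, indMul_add hA.compl, indMul_indMul hA, indMul_compl_indMul hA, add_zero,
    T.add_left, hT.Q_indMul_indMul_compl_self hA hu, zero_add] at h

lemma Q_indMul_left (hu : u ∈ T.dom) (hv : v ∈ T.dom) :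
    T.Q (indMul A u) v = T.Q u (indMul A v) := by
  conv_lhs => rw [← indMul_add_indMul_compl hA v]
  conv_rhs => rw [← indMul_add_indMul_compl hA u]
  rw [T.Q_add_right, T.add_left, hT.Q_indMul_indMul_compl hA hv hu,
    T.symm (indMul Aᶜ u), hT.Q_indMul_indMul_compl hA hu hv]

lemma resInvariant {G : ℝ → Lp ℝ 2 μ →L[ℝ] Lp ℝ 2 μ} (hG : T.IsResolvent G) :
    ResInvariant G A := by
  refine ⟨hA, fun α hα f =>
    (hG.eq_apply_of_forall hα (hT _ (hG.mem_dom hα f)).1 fun v hv => ?_).symm⟩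
  rw [hT.Q_indMul_left hA (hG.mem_dom hα f) hv, inner_indMul_left hA, inner_indMul_left hA,
    hG.Q_add_inner hα f (hT v hv).1]

end WideForm.SplitsAlong

theorem invariant_iff_form_decomposes_general {μ : Measure X} (T : WideForm μ)
    (G : ℝ → Lp ℝ 2 μ →L[ℝ] Lp ℝ 2 μ) (hG : T.IsResolvent G)
    (A : Set X) (hA : MeasurableSet A) :
    ResInvariant G A ↔
      ∀ f ∈ T.dom, indMul A f ∈ T.dom ∧
        T.Q f f = T.Q (indMul A f) (indMul A f) + T.Q (indMul Aᶜ f) (indMul Aᶜ f) :=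
  ⟨fun h => h.splitsAlong hG, fun hT => WideForm.SplitsAlong.resInvariant hT hA hG⟩

/-- characterization of invariance via the form: `A` is `Q`-invariant iff
`1_A f ∈ D(Q)` and `Q(f) = Q(1_A f) + Q(1_{X∖A} f)` for all `f ∈ D(Q)`. -/
theorem invariant_iff_form_decomposes {μ : Measure X} (T : WideForm μ) (hpp : T.PosPres)
    (G : ℝ → Lp ℝ 2 μ →L[ℝ] Lp ℝ 2 μ) (hG : T.IsResolvent G)
    (A : Set X) (hA : MeasurableSet A) :
    ResInvariant G A ↔
      ∀ f ∈ T.dom, indMul A f ∈ T.dom ∧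
        T.Q f f = T.Q (indMul A f) (indMul A f) + T.Q (indMul Aᶜ f) (indMul Aᶜ f) :=
  invariant_iff_form_decomposes_general T G hG A hA
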